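/- Let f : ℂ → ℂ be continuous on an open set U ⊆ ℂ and complex differentiable at every point of U \ X, where X ⊆ U is a compact countable set with exactly one accumulation point w, and w ∈ X. If △(z₁, z₂, z₃) is a triangle contained in U and w = z₁ is a vertex of the triangle, then the integral of f along the closed polygonal path [z₁, z₂, z₃, z₁] equals 0. -/

import Mathlib

/-!
A function continuous on `U` and complex differentiable off a countable set is holomorphic on `U`
(Cauchy's integral formula survives countably many exceptional points). The triangle has a convex
open neighbourhood `V ⊆ U`, and on `V` the function `z ↦ ∫_[c, z] f` is a primitive of `f`:
differentiating under the integral sign,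
`∂_z [f (c + t (z - c)) (z - c)] = ∂_t [t f (c + t (z - c))]`,
so the derivative is `∫₀¹ ∂_t [t f (c + t (z - c))] dt = f z`. The integral of a derivative
around a closed polygon vanishes.
-/

open Set

/-- The complex line integral of `f` along the segment from `a` to `b`:
`∫_{t ∈ [0,1]} f((1-t)·a + t·b) · (b - a) dt`. -/
noncomputable def segmentIntegral (f : ℂ → ℂ) (a b : ℂ) : ℂ :=
  ∫ t in (0:ℝ)..1, f ((1 - t) • a + t • b) * (b - a)

/-- The integral of `f` along the closed polygonal path `[z₁, z₂, z₃, z₁]`. -/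
noncomputable def triangleIntegral (f : ℂ → ℂ) (z₁ z₂ z₃ : ℂ) : ℂ :=
  segmentIntegral f z₁ z₂ + segmentIntegral f z₂ z₃ + segmentIntegral f z₃ z₁

/-- `w` is an accumulation point of `X`: every neighborhood of `w` contains a
point of `X` other than `w`. -/
def IsAccumulationPoint (w : ℂ) (X : Set ℂ) : Prop :=
  ∀ V ∈ nhds w, ∃ x, x ∈ V ∩ X ∧ x ≠ w

open Metric

theorem differentiableOn_of_differentiableAt_off_countable {f : ℂ → ℂ} {U s : Set ℂ}
    (hU : IsOpen U) (hs : s.Countable) (hf : ContinuousOn f U)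
    (hd : ∀ z ∈ U \ s, DifferentiableAt ℂ f z) : DifferentiableOn ℂ f U := by
  intro z hz
  obtain ⟨r, hr, hrU⟩ := nhds_basis_closedBall.mem_iff.1 (hU.mem_nhds hz)
  have hball : ∀ y ∈ ball z r \ s, DifferentiableAt ℂ f y := fun y hy =>
    hd y ⟨hrU (ball_subset_closedBall hy.1), hy.2⟩
  exact (Complex.hasFPowerSeriesOnBall_of_differentiable_off_countable (R := ⟨r, hr.le⟩)
    hs (hf.mono hrU) hball hr).analyticAt.differentiableAt.differentiableWithinAt

theorem IsCompact.exists_isOpen_convex_between {E : Type*} [NormedAddCommGroup E]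
    [NormedSpace ℝ E] {K U : Set E} (hK : IsCompact K) (hKc : Convex ℝ K) (hU : IsOpen U)
    (hKU : K ⊆ U) : ∃ V, IsOpen V ∧ Convex ℝ V ∧ K ⊆ V ∧ V ⊆ U := by
  obtain ⟨δ, hδ, hδU⟩ := hK.exists_thickening_subset_open hU hKU
  exact ⟨thickening δ K, isOpen_thickening, hKc.thickening δ, self_subset_thickening hδ K, hδU⟩

theorem hasDerivAt_segment {E : Type*} [NormedAddCommGroup E] [NormedSpace ℝ E] (a b : E)
    (t : ℝ) :
    HasDerivAt (fun s : ℝ => (1 - s) • a + s • b) (b - a) t := by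
  have h : (fun s : ℝ => (1 - s) • a + s • b) = AffineMap.lineMap a b :=
    funext fun s => (AffineMap.lineMap_apply_module a b s).symm
  rw [h]
  exact AffineMap.hasDerivAt_lineMap

theorem segmentIntegral_eq_sub_of_hasDerivAt {f F : ℂ → ℂ} {V : Set ℂ} (hV : Convex ℝ V)
    (hf : ContinuousOn f V) (hF : ∀ z ∈ V, HasDerivAt F (f z) z) {a b : ℂ} (ha : a ∈ V)
    (hb : b ∈ V) : segmentIntegral f a b = F b - F a := by
  have hmem : ∀ t ∈ uIcc (0:ℝ) 1, (1 - t) • a + t • b ∈ V := by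
    intro t ht
    rw [uIcc_of_le zero_le_one] at ht
    exact hV ha hb (by linarith [ht.2]) ht.1 (by ring)
  have hderiv : ∀ t ∈ uIcc (0:ℝ) 1, HasDerivAt (fun s : ℝ => F ((1 - s) • a + s • b))
      (f ((1 - t) • a + t • b) * (b - a)) t := fun t ht => by
    have := (hF _ (hmem t ht)).scomp t (hasDerivAt_segment a b t)
    rwa [smul_eq_mul, mul_comm] at this
  have hint : IntervalIntegrable (fun t : ℝ => f ((1 - t) • a + t • b) * (b - a))
      MeasureTheory.volume 0 1 :=
    ((hf.comp (by fun_prop) hmem).mul continuousOn_const).intervalIntegrable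
  rw [segmentIntegral, intervalIntegral.integral_eq_sub_of_hasDerivAt hderiv hint]
  simp

theorem triangleIntegral_eq_zero_of_hasDerivAt {f F : ℂ → ℂ} {V : Set ℂ} (hV : Convex ℝ V)
    (hf : ContinuousOn f V) (hF : ∀ z ∈ V, HasDerivAt F (f z) z) {z₁ z₂ z₃ : ℂ}
    (h₁ : z₁ ∈ V) (h₂ : z₂ ∈ V) (h₃ : z₃ ∈ V) : triangleIntegral f z₁ z₂ z₃ = 0 := by
  rw [triangleIntegral, segmentIntegral_eq_sub_of_hasDerivAt hV hf hF h₁ h₂,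
    segmentIntegral_eq_sub_of_hasDerivAt hV hf hF h₂ h₃,
    segmentIntegral_eq_sub_of_hasDerivAt hV hf hF h₃ h₁]
  ring

section Primitive

variable {f : ℂ → ℂ} {c : ℂ}

noncomputable def segmentIntegrandDeriv (f : ℂ → ℂ) (c z : ℂ) (t : ℝ) : ℂ :=
  t * deriv f ((1 - t) • c + t • z) * (z - c) + f ((1 - t) • c + t • z)

theorem hasDerivAt_segmentIntegrand (t : ℝ) {z : ℂ}
    (hf : DifferentiableAt ℂ f ((1 - t) • c + t • z)) :
    HasDerivAt (fun y => f ((1 - t) • c + t • y) * (y - c)) (segmentIntegrandDeriv f c z t) z := by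
  have hγ : HasDerivAt (fun y : ℂ => (1 - t) • c + t • y) (t : ℂ) z := by
    simpa [Complex.real_smul] using
      ((hasDerivAt_id z).const_mul (t : ℂ)).const_add ((1 - t : ℝ) • c)
  exact ((hf.hasDerivAt.comp z hγ).mul ((hasDerivAt_id' z).sub_const c)).congr_deriv
    (by simp only [segmentIntegrandDeriv, Function.comp_apply]; ring)

theorem hasDerivAt_ofReal_mul_comp_segment (z : ℂ) {t : ℝ}
    (hf : DifferentiableAt ℂ f ((1 - t) • c + t • z)) :
    HasDerivAt (fun s : ℝ => (s : ℂ) * f ((1 - s) • c + s • z))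
      (segmentIntegrandDeriv f c z t) t :=
  ((Complex.ofRealCLM.hasDerivAt (x := t)).mul
    (hf.hasDerivAt.scomp t (hasDerivAt_segment c z t))).congr_deriv
    (by simp only [segmentIntegrandDeriv, Complex.ofRealCLM_apply, Complex.ofReal_one,
      Function.comp_apply, smul_eq_mul]; ring)

theorem integral_segmentIntegrandDeriv {z : ℂ}
    (hf : ∀ t ∈ Icc (0:ℝ) 1, DifferentiableAt ℂ f ((1 - t) • c + t • z))
    (hcont : ContinuousOn (segmentIntegrandDeriv f c z) (Icc 0 1)) :
    ∫ t in (0:ℝ)..1, segmentIntegrandDeriv f c z t = f z := by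
  rw [intervalIntegral.integral_eq_sub_of_hasDerivAt
    (fun t ht => hasDerivAt_ofReal_mul_comp_segment z (hf t (by simpa using ht)))
    (hcont.intervalIntegrable_of_Icc zero_le_one)]
  simp

variable {V : Set ℂ}

theorem continuousOn_segmentIntegrandDeriv (hV : IsOpen V) (hVc : Convex ℝ V)
    (hf : DifferentiableOn ℂ f V) (hc : c ∈ V) {S : Set ℂ} (hS : S ⊆ V) :
    ContinuousOn (fun p : ℂ × ℝ => segmentIntegrandDeriv f c p.1 p.2) (S ×ˢ Icc 0 1) := by
  have hmaps : MapsTo (fun p : ℂ × ℝ => (1 - p.2) • c + p.2 • p.1) (S ×ˢ Icc 0 1) V :=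
    fun p hp => hVc hc (hS hp.1) (by linarith [hp.2.2]) hp.2.1 (by ring)
  have hγ : Continuous fun p : ℂ × ℝ => (1 - p.2) • c + p.2 • p.1 := by fun_prop
  have hdf := (hf.deriv hV).continuousOn.comp hγ.continuousOn hmaps
  have hff := hf.continuousOn.comp hγ.continuousOn hmaps
  exact ((by fun_prop : Continuous fun p : ℂ × ℝ => (p.2 : ℂ)).continuousOn.mul hdf |>.mul
    (by fun_prop : Continuous fun p : ℂ × ℝ => p.1 - c).continuousOn).add hff

theorem hasDerivAt_segmentIntegral (hV : IsOpen V) (hVc : Convex ℝ V)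
    (hf : DifferentiableOn ℂ f V) (hc : c ∈ V) {z₀ : ℂ} (hz₀ : z₀ ∈ V) :
    HasDerivAt (segmentIntegral f c) (f z₀) z₀ := by
  obtain ⟨ε, hε, hεV⟩ := nhds_basis_closedBall.mem_iff.1 (hV.mem_nhds hz₀)
  have hγV : ∀ z ∈ closedBall z₀ ε, ∀ t ∈ Icc (0:ℝ) 1, (1 - t) • c + t • z ∈ V :=
    fun z hz t ht => hVc hc (hεV hz) (by linarith [ht.2]) ht.1 (by ring)
  have hfγ : ∀ z ∈ closedBall z₀ ε, ∀ t ∈ Icc (0:ℝ) 1,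
      DifferentiableAt ℂ f ((1 - t) • c + t • z) :=
    fun z hz t ht => hf.differentiableAt (hV.mem_nhds (hγV z hz t ht))
  have hG'cont := continuousOn_segmentIntegrandDeriv hV hVc hf hc hεV
  obtain ⟨B, hB⟩ := (isCompact_closedBall z₀ ε).prod isCompact_Icc |>.exists_bound_of_continuousOn
    hG'cont
  have hz₀ε : z₀ ∈ closedBall z₀ ε := mem_closedBall_self hε.le
  have hG'z₀ : ContinuousOn (segmentIntegrandDeriv f c z₀) (Icc 0 1) :=
    (hG'cont.comp (Continuous.prodMk_right z₀).continuousOn fun _ ht => ⟨hz₀ε, ht⟩ :)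
  have hIoc : uIoc (0:ℝ) 1 ⊆ Icc 0 1 := by
    rw [uIoc_of_le zero_le_one]; exact Ioc_subset_Icc_self
  have hF_cont : ∀ z ∈ closedBall z₀ ε,
      ContinuousOn (fun t : ℝ => f ((1 - t) • c + t • z) * (z - c)) (Icc 0 1) := fun z hz =>
    (hf.continuousOn.comp (by fun_prop) (hγV z hz)).mul continuousOn_const
  obtain ⟨-, hderiv⟩ := intervalIntegral.hasDerivAt_integral_of_dominated_loc_of_deriv_le
    (F := fun z t => f ((1 - t) • c + t • z) * (z - c)) (F' := segmentIntegrandDeriv f c)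
    (bound := fun _ => B) (μ := MeasureTheory.volume) (ball_mem_nhds z₀ hε)
    (by
      filter_upwards [ball_mem_nhds z₀ hε] with z hz
      exact ((hF_cont z (ball_subset_closedBall hz)).mono hIoc).aestronglyMeasurable
        measurableSet_uIoc)
    ((hF_cont z₀ hz₀ε).intervalIntegrable_of_Icc zero_le_one)
    ((hG'z₀.mono hIoc).aestronglyMeasurable measurableSet_uIoc)
    (MeasureTheory.ae_of_all _ fun t ht z hz => hB (z, t) ⟨ball_subset_closedBall hz, hIoc ht⟩)
    intervalIntegrable_const
    (MeasureTheory.ae_of_all _ fun t ht z hz =>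
      hasDerivAt_segmentIntegrand t (hfγ z (ball_subset_closedBall hz) t (hIoc ht)))
  rwa [integral_segmentIntegrandDeriv (hfγ z₀ hz₀ε) hG'z₀] at hderiv

end Primitive

theorem stmt_5_general (f : ℂ → ℂ) (U : Set ℂ) (hU : IsOpen U)
    (hf : ContinuousOn f U) (X : Set ℂ)
    (hXcount : X.Countable)
    (z₁ z₂ z₃ : ℂ) (htri : convexHull ℝ {z₁, z₂, z₃} ⊆ U)
    (hd : ∀ z ∈ U \ X, DifferentiableAt ℂ f z) :
    triangleIntegral f z₁ z₂ z₃ = 0 := by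
  have hfU : DifferentiableOn ℂ f U :=
    differentiableOn_of_differentiableAt_off_countable hU hXcount hf hd
  have hT : IsCompact (convexHull ℝ {z₁, z₂, z₃}) :=
    (((finite_singleton z₃).insert z₂).insert z₁).isCompact_convexHull (𝕜 := ℝ)
  obtain ⟨V, hVo, hVc, hTV, hVU⟩ := hT.exists_isOpen_convex_between (convex_convexHull ℝ _) hU htri
  have hmem : ∀ z ∈ ({z₁, z₂, z₃} : Set ℂ), z ∈ V := fun z hz => hTV (subset_convexHull ℝ _ hz)
  have hfV : DifferentiableOn ℂ f V := hfU.mono hVU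
  have h₁ : z₁ ∈ V := hmem z₁ (by simp)
  exact triangleIntegral_eq_zero_of_hasDerivAt hVc hfV.continuousOn
    (fun _ hz => hasDerivAt_segmentIntegral hVo hVc hfV h₁ hz) h₁ (hmem z₂ (by simp))
    (hmem z₃ (by simp))

theorem stmt_5 (f : ℂ → ℂ) (U : Set ℂ) (hU : IsOpen U)
    (hf : ContinuousOn f U) (X : Set ℂ) (hXU : X ⊆ U)
    (hXcomp : IsCompact X) (hXcount : X.Countable)
    (w : ℂ) (hacc : {p | IsAccumulationPoint p X} = {w}) (hwX : w ∈ X)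
    (z₁ z₂ z₃ : ℂ) (htri : convexHull ℝ {z₁, z₂, z₃} ⊆ U)
    (hd : ∀ z ∈ U \ X, DifferentiableAt ℂ f z)
    (hvert : w = z₁) :
    triangleIntegral f z₁ z₂ z₃ = 0 :=
  stmt_5_general f U hU hf X hXcount z₁ z₂ z₃ htri hd
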